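/- Let d ≥ 2 and N ≥ 2, and set p_1 = ∑_{k=2}^N d^{N−k}. Then { g + s·p_1 : g ∈ {0,…,d^{N−1}−1}, s ∈ {0,…,d−1} } = {0, 1, …, 2d^{N−1} − 2}; in particular this set has exactly 2d^{N−1} − 1 elements. -/

import Mathlib

/-!
Reversing the index turns `p₁` into the geometric sum `1 + d + ⋯ + d^(N-2)`, so
`(d - 1) p₁ + 1 = d^(N-1)`. In particular `p₁ ≤ d^(N-1)`: consecutive translates
`[s p₁, s p₁ + d^(N-1))` of the block of admissible `g` overlap or abut, and their union for
`s < d` is the interval `[0, d^(N-1) + (d - 1) p₁) = [0, 2 d^(N-1) - 1)`.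
-/

open Finset

theorem sum_Icc_pow_sub_eq_geom_sum (d N : ℕ) :
    ∑ k ∈ Icc 2 N, d ^ (N - k) = ∑ i ∈ range (N - 1), d ^ i := by
  rw [← Ico_add_one_right_eq_Icc, sum_Ico_reflect _ _ le_rfl, range_eq_Ico]
  congr 2
  omega

theorem geom_sum_mul_sub_one_add_one {d : ℕ} (hd : 1 ≤ d) (n : ℕ) :
    (∑ i ∈ range n, d ^ i) * (d - 1) + 1 = d ^ n := by
  obtain ⟨e, rfl⟩ := Nat.exists_eq_add_of_le' hd
  simpa using geom_sum_mul_add e n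

theorem setOf_add_mul_eq_Iio {G p m : ℕ} (hpG : p ≤ G) (hm : 0 < m) :
    {n : ℕ | ∃ g < G, ∃ s < m, n = g + s * p} = Set.Iio (G + (m - 1) * p) := by
  ext n
  simp only [Set.mem_ofPred_eq, Set.mem_Iio]
  constructor
  · rintro ⟨g, hg, s, hs, rfl⟩
    have : s * p ≤ (m - 1) * p := Nat.mul_le_mul_right p (by omega)
    omega
  · intro hn
    obtain hp | hp := Nat.eq_zero_or_pos p
    · exact ⟨n, by simpa [hp] using hn, 0, hm, by simp⟩
    by_cases hq : n / p < m
    · exact ⟨n % p, (Nat.mod_lt n hp).trans_le hpG, n / p, hq, (Nat.mod_add_div' n p).symm⟩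
    · have : (m - 1) * p ≤ n :=
        (Nat.mul_le_mul_right p (by omega)).trans (Nat.div_mul_le_self n p)
      exact ⟨n - (m - 1) * p, by omega, m - 1, by omega, by omega⟩

theorem stmt11 (d N : ℕ) (hd : 2 ≤ d) :
    {n : ℕ | ∃ g < d ^ (N - 1), ∃ s < d,
        n = g + s * ∑ k ∈ Finset.Icc 2 N, d ^ (N - k)}
      = Set.Iio (2 * d ^ (N - 1) - 1) ∧
    Set.ncard {n : ℕ | ∃ g < d ^ (N - 1), ∃ s < d,
        n = g + s * ∑ k ∈ Finset.Icc 2 N, d ^ (N - k)}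
      = 2 * d ^ (N - 1) - 1 := by
  have hgeom : (∑ k ∈ Icc 2 N, d ^ (N - k)) * (d - 1) + 1 = d ^ (N - 1) := by
    rw [sum_Icc_pow_sub_eq_geom_sum]
    exact geom_sum_mul_sub_one_add_one (by omega) _
  set p := ∑ k ∈ Icc 2 N, d ^ (N - k)
  have hpG : p ≤ d ^ (N - 1) := by
    have : p ≤ p * (d - 1) := Nat.le_mul_of_pos_right p (by omega)
    omega
  have hset := setOf_add_mul_eq_Iio hpG (by omega : 0 < d)
  rw [show d ^ (N - 1) + (d - 1) * p = 2 * d ^ (N - 1) - 1 by rw [mul_comm]; omega] at hset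
  exact ⟨hset, by rw [hset, Set.ncard_Iio_nat]⟩
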